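/- arXiv:1505.06499 — 2 statements merged into one kernel-verified Lean document; each statement's English description precedes it below -/
import Mathlib

section
/- Let n ≥ 2, ℓ > 0, K₁ ≥ 1, and let Ω ⊆ ℝ^{n+1} be an open set with boundary E = ∂Ω and δ(X) := dist(X,E). Suppose: x_Q ∈ E; Y ∈ Ω satisfies Y = δ(Y) e_{n+1} with 0 ∈ E ∩ ∂B(Y, δ(Y)); K₁^{-1} ℓ ≤ δ(Y) ≤ K₁ ℓ and |Y − x_Q| ≤ K₁ ℓ; and for every X ∈ Ω with X ≈ Y, every point w ∈ E ∩ ∂B(X, δ(X)) satisfies |w_{n+1}| ≤ K₁ ε^{M/2} ℓ. If ε is sufficiently small and M is sufficiently large, depending only on n and K₁, then every point X of the region 𝒪 := B(x_Q, 2ε^{-2}ℓ) ∩ {W ∈ ℝ^{n+1} : W_{n+1} > ε² ℓ} satisfies X ≈ Y; in particular 𝒪 ⊆ Ω and 𝒪 ∩ E = ∅. -/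
open MeasureTheory Metric Set
open scoped ENNReal NNReal InnerProductSpace

noncomputable section

abbrev ES (n : ℕ) : Type := EuclideanSpace ℝ (Fin (n + 1))

/-- The "upward" unit vector `e_{n+1}` of `ℝ^{n+1}`. -/
def eLast (n : ℕ) : ES n := EuclideanSpace.single (Fin.last n) (1 : ℝ)

/-- `X ≈ Y`: `X` and `Y` are joined by a chain of at most `ε⁻¹` balls
`B(c_k, δ(c_k)/2)` whose centers satisfy `ε³ℓ ≤ δ(c_k) ≤ ε⁻³ℓ`, where `δ = dist(·,E)`. -/
def ChainRel {n : ℕ} (E : Set (ES n)) (ℓ ε : ℝ) (A B : ES n) : Prop :=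
  ∃ N : ℕ, (N + 1 : ℝ) ≤ ε⁻¹ ∧ ∃ c : ℕ → ES n,
    (∀ k ≤ N, ε ^ 3 * ℓ ≤ Metric.infDist (c k) E ∧ Metric.infDist (c k) E ≤ ε⁻¹ ^ 3 * ℓ) ∧
    A ∈ ball (c 0) (Metric.infDist (c 0) E / 2) ∧
    B ∈ ball (c N) (Metric.infDist (c N) E / 2) ∧
    ∀ k < N, (ball (c k) (Metric.infDist (c k) E / 2) ∩
      ball (c (k + 1)) (Metric.infDist (c (k + 1)) E / 2)).Nonempty

/-!
Write `δ = dist(·, E)`. The flatness hypothesis puts the nearest boundary point of any `Z ∈ Ω`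
chained to `Y` at height at most `ε²ℓ/2`, so `δ(Z) ≥ Z_{n+1} - ε²ℓ/2`: the admissible ball
around `Z` then contains every point within `(Z_{n+1} - ε²ℓ/2)/2` of `Z`. Climb from `Y` along
the vertical axis by factors `5/4` up to height `≈ 100 ε⁻²ℓ`, move horizontally above `X`, and
descend by factors `4/5` to height `≈ X_{n+1}`. Each new center lies in the admissible ball of
the previous one, hence is chained to `Y` and in `Ω`, and the bound on `δ` applies to it in turn.
Both vertical phases take `O(log ε⁻¹)` steps, which fits in a chain of `ε⁻¹` balls once `ε` is
small.
-/

lemma ball_infDist_frontier_subset {V : Type*} [NormedAddCommGroup V] [NormedSpace ℝ V]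
    {Ω : Set V} (hΩ : IsOpen Ω) {c : V} (hc : c ∈ Ω) :
    ball c (infDist c (frontier Ω)) ⊆ Ω := by
  rcases (ball c (infDist c (frontier Ω))).eq_empty_or_nonempty with h | ⟨x, hx⟩
  · simp [h]
  refine (convex_ball _ _).isPreconnected.subset_of_closure_inter_subset hΩ
    ⟨c, mem_ball_self (pos_of_mem_ball hx), hc⟩ ?_
  rintro z ⟨hz, hzb⟩
  rw [closure_eq_self_union_frontier] at hz
  exact hz.resolve_right fun hzf => disjoint_ball_infDist.ne_of_mem hzb hzf rfl

lemma apply_sub_le_infDist {ι : Type*} [Fintype ι] {E : Set (EuclideanSpace ℝ ι)}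
    (hE : IsClosed E) (hne : E.Nonempty) (Z : EuclideanSpace ℝ ι) (i : ι) {σ : ℝ}
    (h : ∀ w ∈ E, dist w Z = infDist Z E → |w i| ≤ σ) : Z i - σ ≤ infDist Z E := by
  obtain ⟨w, hwE, hw⟩ := hE.exists_infDist_eq_dist hne Z
  have hwi := h w hwE (by rw [hw, dist_comm])
  have hZw : |Z i - w i| ≤ infDist Z E := hw ▸ PiLp.dist_apply_le Z w i
  linarith [abs_le.1 hwi, abs_le.1 hZw]

section Vertical

variable {n : ℕ}

@[simp] lemma eLast_last : eLast n (Fin.last n) = 1 := by simp [eLast]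

lemma norm_eLast : ‖eLast n‖ = 1 := by simp [eLast]

lemma dist_add_smul_eLast (P : ES n) (a b : ℝ) :
    dist (P + a • eLast n) (P + b • eLast n) = |a - b| := by
  rw [dist_add_left, dist_eq_norm, ← sub_smul, norm_smul, norm_eLast, mul_one, Real.norm_eq_abs]

end Vertical

section Chains

variable {n : ℕ} {E : Set (ES n)} {ℓ ε : ℝ}

theorem ChainRel.symm {A B : ES n} (h : ChainRel E ℓ ε A B) : ChainRel E ℓ ε B A := by
  obtain ⟨N, hN, c, hadm, hA, hB, hlink⟩ := h
  refine ⟨N, hN, fun k => c (N - k), fun k _ => hadm _ (Nat.sub_le _ _),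
    by simpa using hB, by simpa using hA, fun k hk => ?_⟩
  have hidx : N - k = N - (k + 1) + 1 := by omega
  simpa only [hidx, inter_comm] using hlink (N - (k + 1)) (by omega)

lemma chainRel_of_steps (hε : 0 < ε) (hℓ : 0 < ℓ) {c : ℕ → ES n} {N : ℕ}
    (hN : (N + 1 : ℝ) ≤ ε⁻¹)
    (hadm : ∀ k ≤ N, ε ^ 3 * ℓ ≤ infDist (c k) E ∧ infDist (c k) E ≤ ε⁻¹ ^ 3 * ℓ)
    (hstep : ∀ k < N, c (k + 1) ∈ ball (c k) (infDist (c k) E / 2)) {A B : ES n}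
    (hA : A ∈ ball (c 0) (infDist (c 0) E / 2)) (hB : B ∈ ball (c N) (infDist (c N) E / 2)) :
    ChainRel E ℓ ε A B :=
  ⟨N, hN, c, hadm, hA, hB, fun k hk => ⟨c (k + 1), hstep k hk,
    mem_ball_self (half_pos ((by positivity : 0 < ε ^ 3 * ℓ).trans_le (hadm (k + 1) hk).1))⟩⟩

end Chains

section Propagation

variable {n : ℕ} {Ω E : Set (ES n)} {ℓ ε σ : ℝ} {c : ℕ → ES n}

lemma mem_and_chainRel_of_steps (hΩ : IsOpen Ω) (hE : E = frontier Ω) (hε : 0 < ε)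
    (hℓ : 0 < ℓ) {j : ℕ} (hj : (j + 1 : ℝ) ≤ ε⁻¹)
    (hlow : ∀ i ≤ j, c i ∈ Ω ∧ c i (Fin.last n) - σ ≤ infDist (c i) E)
    (hheight : ∀ i ≤ j, ε ^ 3 * ℓ ≤ c i (Fin.last n) - σ)
    (hfar : ∀ i ≤ j, infDist (c i) E ≤ ε⁻¹ ^ 3 * ℓ)
    (hstep : ∀ i < j, dist (c (i + 1)) (c i) < (c i (Fin.last n) - σ) / 2)
    {X : ES n} (hX : dist X (c j) < (c j (Fin.last n) - σ) / 2) :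
    X ∈ Ω ∧ ChainRel E ℓ ε X (c 0) := by
  have hδ : ∀ i ≤ j, ε ^ 3 * ℓ ≤ infDist (c i) E := fun i hi =>
    (hheight i hi).trans (hlow i hi).2
  have hball : ∀ i ≤ j, ∀ Z, dist Z (c i) < (c i (Fin.last n) - σ) / 2 →
      Z ∈ ball (c i) (infDist (c i) E / 2) := fun i hi Z hZ => by
    rw [mem_ball]; linarith [(hlow i hi).2]
  have hXball := hball j le_rfl X hX
  refine ⟨?_, (chainRel_of_steps hε hℓ hj (fun i hi => ⟨hδ i hi, hfar i hi⟩)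
    (fun i hi => hball i hi.le _ (hstep i hi)) (mem_ball_self ?_) hXball).symm⟩
  · refine ball_infDist_frontier_subset hΩ (hlow j le_rfl).1 (ball_subset_ball ?_ (hE ▸ hXball))
    exact half_le_self infDist_nonneg
  · exact half_pos ((by positivity : 0 < ε ^ 3 * ℓ).trans_le (hδ 0 (Nat.zero_le _)))

lemma mem_and_chainRel_of_height_steps (hΩ : IsOpen Ω) (hE : E = frontier Ω) (hε : 0 < ε)
    (hℓ : 0 < ℓ) {N : ℕ} (hN : (N + 1 : ℝ) ≤ ε⁻¹)
    (hflat : ∀ Z ∈ Ω, ChainRel E ℓ ε Z (c 0) → Z (Fin.last n) - σ ≤ infDist Z E)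
    (hc0 : c 0 ∈ Ω) (hδ0 : c 0 (Fin.last n) - σ ≤ infDist (c 0) E)
    (hheight : ∀ k ≤ N, ε ^ 3 * ℓ ≤ c k (Fin.last n) - σ)
    (hfar : ∀ k ≤ N, infDist (c k) E ≤ ε⁻¹ ^ 3 * ℓ)
    (hstep : ∀ k < N, dist (c (k + 1)) (c k) < (c k (Fin.last n) - σ) / 2)
    {X : ES n} (hX : dist X (c N) < (c N (Fin.last n) - σ) / 2) :
    X ∈ Ω ∧ ChainRel E ℓ ε X (c 0) := by
  have hreach : ∀ j ≤ N, (∀ i ≤ j, c i ∈ Ω ∧ c i (Fin.last n) - σ ≤ infDist (c i) E) →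
      ∀ Z, dist Z (c j) < (c j (Fin.last n) - σ) / 2 → Z ∈ Ω ∧ ChainRel E ℓ ε Z (c 0) :=
    fun j hj hlow Z hZ => mem_and_chainRel_of_steps hΩ hE hε hℓ
      (hN.trans' (by exact_mod_cast Nat.succ_le_succ hj)) hlow
      (fun i hi => hheight i (hi.trans hj)) (fun i hi => hfar i (hi.trans hj))
      (fun i hi => hstep i (hi.trans_le hj)) hZ
  have hlow : ∀ j ≤ N, ∀ i ≤ j, c i ∈ Ω ∧ c i (Fin.last n) - σ ≤ infDist (c i) E := by
    intro j
    induction j with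
    | zero => intro _ i hi; obtain rfl := Nat.le_zero.1 hi; exact ⟨hc0, hδ0⟩
    | succ j ih =>
      intro hj i hi
      rcases hi.lt_or_eq with hi | rfl
      · exact ih (by omega) i (by omega)
      · obtain ⟨hiΩ, hiY⟩ := hreach j (by omega) (ih (by omega)) _ (hstep j hj)
        exact ⟨hiΩ, hflat _ hiΩ hiY⟩
  exact hreach N le_rfl (hlow N le_rfl) X hX

end Propagation

section UpDownPath

variable {n : ℕ} {h₀ : ℝ} {a b k : ℕ}

def upDownHeight (h₀ : ℝ) (a k : ℕ) : ℝ :=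
  if k ≤ a then (5 / 4 : ℝ) ^ k * h₀ else (4 / 5 : ℝ) ^ (k - (a + 1)) * ((5 / 4 : ℝ) ^ a * h₀)

def upDownPath (P : ES n) (h₀ : ℝ) (a k : ℕ) : ES n :=
  (if k ≤ a then 0 else P) + upDownHeight h₀ a k • eLast n

lemma upDownPath_zero (P : ES n) : upDownPath P h₀ a 0 = h₀ • eLast n := by
  simp [upDownPath, upDownHeight]

lemma upDownPath_end (P : ES n) :
    upDownPath P h₀ a (a + 1 + b) = P + ((4 / 5 : ℝ) ^ b * ((5 / 4 : ℝ) ^ a * h₀)) • eLast n := by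
  simp [upDownPath, upDownHeight, show ¬a + 1 + b ≤ a by omega,
    show a + 1 + b - (a + 1) = b by omega]

lemma upDownPath_last {P : ES n} (hP : P (Fin.last n) = 0) :
    upDownPath P h₀ a k (Fin.last n) = upDownHeight h₀ a k := by
  unfold upDownPath; split_ifs <;> simp [hP]

lemma upDownHeight_le (hh₀ : 0 ≤ h₀) : upDownHeight h₀ a k ≤ (5 / 4 : ℝ) ^ a * h₀ := by
  unfold upDownHeight
  split_ifs with hk
  · gcongr; norm_num
  · exact mul_le_of_le_one_left (by positivity) (pow_le_one₀ (by norm_num) (by norm_num))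

lemma min_le_upDownHeight (hh₀ : 0 ≤ h₀) (hk : k ≤ a + 1 + b) :
    min h₀ ((4 / 5 : ℝ) ^ b * ((5 / 4 : ℝ) ^ a * h₀)) ≤ upDownHeight h₀ a k := by
  unfold upDownHeight
  split_ifs with hka
  · exact min_le_of_left_le (le_mul_of_one_le_left hh₀ (one_le_pow₀ (by norm_num)))
  · exact min_le_of_right_le (mul_le_mul_of_nonneg_right
      (pow_le_pow_of_le_one (by norm_num) (by norm_num) (by omega)) (by positivity))

lemma norm_upDownPath_le (hh₀ : 0 ≤ h₀) (P : ES n) :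
    ‖upDownPath P h₀ a k‖ ≤ ‖P‖ + (5 / 4 : ℝ) ^ a * h₀ := by
  refine (norm_add_le _ _).trans (add_le_add ?_ ?_)
  · split_ifs <;> simp
  · rw [norm_smul, norm_eLast, mul_one, Real.norm_eq_abs,
      abs_of_nonneg ((min_le_upDownHeight (b := k) hh₀ (by omega)).trans' (by positivity))]
    exact upDownHeight_le hh₀

lemma dist_upDownPath_succ_le (hh₀ : 0 ≤ h₀) (P : ES n) :
    dist (upDownPath P h₀ a (k + 1)) (upDownPath P h₀ a k) ≤
      if k = a then ‖P‖ else upDownHeight h₀ a k / 4 := by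
  have hpos : 0 ≤ upDownHeight h₀ a k :=
    (min_le_upDownHeight (b := k) hh₀ (by omega)).trans' (by positivity)
  rcases lt_trichotomy k a with hk | rfl | hk
  · have hk' : k + 1 ≤ a := hk
    rw [if_neg hk.ne, upDownPath, upDownPath, if_pos hk', if_pos hk.le, dist_add_smul_eLast]
    have hstep : upDownHeight h₀ a (k + 1) - upDownHeight h₀ a k = upDownHeight h₀ a k / 4 := by
      simp only [upDownHeight, if_pos hk', if_pos hk.le, pow_succ]; ring
    rw [hstep, abs_of_nonneg (by positivity)]
  · simp [upDownPath, upDownHeight]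
  · rw [if_neg hk.ne', upDownPath, upDownPath, if_neg (by omega), if_neg (by omega),
      dist_add_smul_eLast]
    have hstep : upDownHeight h₀ a (k + 1) - upDownHeight h₀ a k = -(upDownHeight h₀ a k / 5) := by
      simp only [upDownHeight, if_neg (show ¬k + 1 ≤ a by omega), if_neg (show ¬k ≤ a by omega),
        show k + 1 - (a + 1) = k - (a + 1) + 1 by omega, pow_succ]
      ring
    rw [hstep, abs_neg, abs_of_nonneg (by positivity)]
    linarith

end UpDownPath

lemma natCast_pow_five_le (q : ℕ) : (q : ℝ) ^ 5 ≤ 10 ^ 5 * (5 / 4 : ℝ) ^ q := by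
  induction q with
  | zero => norm_num
  | succ q ih =>
    -- `q ↦ q ^ 5 * (4 / 5) ^ q` increases only up to `q ≈ 22.4`.
    rcases le_or_gt q 22 with hq | hq
    · interval_cases q <;> norm_num
    · have hq' : (23 : ℝ) ≤ q := by exact_mod_cast hq
      have hgrowth : ((q : ℝ) + 1) ^ 5 ≤ 5 / 4 * (q : ℝ) ^ 5 := by
        nlinarith [sq_nonneg ((q : ℝ) - 23), pow_pos (show (0 : ℝ) < q by linarith) 3]
      push_cast
      rw [pow_succ (5 / 4 : ℝ)]
      linarith

lemma natCast_le_of_pow_le {q : ℕ} {B x : ℝ} (hq : (5 / 4 : ℝ) ^ q ≤ B) (hx : 0 ≤ x)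
    (hB : 10 ^ 5 * B ≤ x ^ 5) : (q : ℝ) ≤ x :=
  le_of_pow_le_pow_left₀ (n := 5) (by norm_num) hx (by linarith [natCast_pow_five_le q])

lemma natCast_add_le_of_pow_le {K I : ℝ} {a b : ℕ} (hK : 1 ≤ K) (hI : 10 ^ 10 * K ≤ I)
    (ha : (5 / 4 : ℝ) ^ a ≤ 125 * K * I ^ 2) (hb : (5 / 4 : ℝ) ^ b ≤ 125 * I ^ 4) :
    ((a + 1 + b : ℕ) + 1 : ℝ) ≤ I := by
  have hI₁ : 10 ^ 10 ≤ I := by linarith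
  have hI₃ : 10 ^ 10 * K ≤ I ^ 3 := hI.trans (le_self_pow₀ (by linarith) (by norm_num))
  have ha' : (a : ℝ) ≤ I / 3 := natCast_le_of_pow_le ha (by positivity)
    (by nlinarith [mul_le_mul_of_nonneg_left hI₃ (sq_nonneg I)])
  have hb' : (b : ℝ) ≤ I / 3 := natCast_le_of_pow_le hb (by positivity)
    (by nlinarith [mul_le_mul_of_nonneg_left hI₁ (pow_nonneg (by positivity : (0 : ℝ) ≤ I) 4)])
  push_cast
  linarith

lemma exists_upDown_exponents {K₁ ε ℓ h₀ x : ℝ} (hK₁ : 1 ≤ K₁) (hε : 0 < ε)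
    (hεK : 10 ^ 10 * K₁ ≤ ε⁻¹) (hℓ : 0 < ℓ) (hh₀ : K₁⁻¹ * ℓ ≤ h₀) (hh₀' : h₀ ≤ K₁ * ℓ)
    (hx : ε ^ 2 * ℓ < x) (hx' : x < 3 * ε⁻¹ ^ 2 * ℓ) :
    ∃ a b : ℕ, 100 * ε⁻¹ ^ 2 * ℓ < (5 / 4 : ℝ) ^ a * h₀ ∧
      (5 / 4 : ℝ) ^ a * h₀ ≤ 125 * ε⁻¹ ^ 2 * ℓ ∧
      x ≤ (4 / 5 : ℝ) ^ b * ((5 / 4 : ℝ) ^ a * h₀) ∧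
      (4 / 5 : ℝ) ^ b * ((5 / 4 : ℝ) ^ a * h₀) < 5 / 4 * x ∧
      ((a + 1 + b : ℕ) + 1 : ℝ) ≤ ε⁻¹ := by
  set I := ε⁻¹
  have hεI : ε ^ 2 * I ^ 2 = 1 := by rw [← mul_pow, mul_inv_cancel₀ hε.ne', one_pow]
  have hK₀ : 0 < K₁ := by linarith
  have hh₀pos : 0 < h₀ := (by positivity : 0 < K₁⁻¹ * ℓ).trans_le hh₀
  have hℓh₀ : ℓ ≤ K₁ * h₀ := by
    rwa [inv_mul_le_iff₀ hK₀] at hh₀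
  have hKI : K₁ ≤ I ^ 2 := by nlinarith
  obtain ⟨m, hm, hm'⟩ := exists_nat_pow_near
    ((one_le_div hh₀pos).2 (by nlinarith : h₀ ≤ 100 * I ^ 2 * ℓ)) (by norm_num : (1 : ℝ) < 5 / 4)
  rw [le_div_iff₀ hh₀pos] at hm
  rw [div_lt_iff₀ hh₀pos] at hm'
  set t := (5 / 4 : ℝ) ^ (m + 1) * h₀ with ht_def
  have ht : t ≤ 125 * I ^ 2 * ℓ := by rw [ht_def, pow_succ]; linarith
  have ht₀ : 0 < t := by positivity
  have hxt : x < t := by nlinarith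
  have hx₀ : 0 < x := (by positivity : 0 ≤ ε ^ 2 * ℓ).trans_lt hx
  obtain ⟨b, hb, hb'⟩ := exists_nat_pow_near_of_lt_one (div_pos hx₀ ht₀)
    ((div_le_one ht₀).2 hxt.le) (by norm_num : (0 : ℝ) < 4 / 5) (by norm_num : (4 / 5 : ℝ) < 1)
  rw [lt_div_iff₀ ht₀] at hb
  rw [div_le_iff₀ ht₀] at hb'
  refine ⟨m + 1, b, hm', ht, hb', by rw [pow_succ] at hb; linarith,
    natCast_add_le_of_pow_le hK₁ hεK ?_ ?_⟩
  · refine le_of_mul_le_mul_right ?_ hh₀pos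
    nlinarith
  · have hinv : (5 / 4 : ℝ) ^ b * (4 / 5) ^ b = 1 := by rw [← mul_pow]; norm_num
    have hlow : (5 / 4 : ℝ) ^ b * (ε ^ 2 * ℓ) < 125 * I ^ 2 * ℓ := by
      calc (5 / 4 : ℝ) ^ b * (ε ^ 2 * ℓ) < (5 / 4) ^ b * ((4 / 5) ^ b * t) :=
            mul_lt_mul_of_pos_left (by linarith) (by positivity)
        _ = t := by rw [← mul_assoc, hinv, one_mul]
        _ ≤ 125 * I ^ 2 * ℓ := ht
    refine le_of_mul_le_mul_right ?_ hℓ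
    nlinarith

lemma exists_upDown_chain {n : ℕ} {K₁ ε ℓ h₀ : ℝ} (hK₁ : 1 ≤ K₁) (hε : 0 < ε)
    (hεK : 10 ^ 10 * K₁ ≤ ε⁻¹) (hℓ : 0 < ℓ) (hh₀ : K₁⁻¹ * ℓ ≤ h₀) (hh₀' : h₀ ≤ K₁ * ℓ)
    {X : ES n} (hX : ‖X‖ < 3 * ε⁻¹ ^ 2 * ℓ) (hXl : ε ^ 2 * ℓ < X (Fin.last n)) :
    ∃ N : ℕ, ∃ c : ℕ → ES n, (N + 1 : ℝ) ≤ ε⁻¹ ∧ c 0 = h₀ • eLast n ∧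
      (∀ k ≤ N, ε ^ 3 * ℓ ≤ c k (Fin.last n) - ε ^ 2 * ℓ / 2 ∧ ‖c k‖ ≤ ε⁻¹ ^ 3 * ℓ) ∧
      (∀ k < N, dist (c (k + 1)) (c k) < (c k (Fin.last n) - ε ^ 2 * ℓ / 2) / 2) ∧
      dist X (c N) < (c N (Fin.last n) - ε ^ 2 * ℓ / 2) / 2 := by
  have hxX : X (Fin.last n) ≤ ‖X‖ := (le_abs_self _).trans (PiLp.norm_apply_le X _)
  obtain ⟨a, b, ht, ht', hs, hs', hN⟩ :=
    exists_upDown_exponents hK₁ hε hεK hℓ hh₀ hh₀' hXl (hxX.trans_lt hX)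
  set I := ε⁻¹
  set x := X (Fin.last n)
  set t := (5 / 4 : ℝ) ^ a * h₀
  have hI : 10 ^ 10 ≤ I := by linarith
  have hεI : ε * I = 1 := mul_inv_cancel₀ hε.ne'
  have hεℓ : ε ^ 2 * ℓ ≤ I ^ 2 * ℓ := by gcongr; nlinarith
  have hε₃ : ε ^ 3 * ℓ ≤ ε ^ 2 * ℓ / 2 := by
    have : ε ≤ 1 / 2 := by nlinarith
    nlinarith [mul_le_mul_of_nonneg_right this (by positivity : 0 ≤ ε ^ 2 * ℓ)]
  have hh₀ε : ε ^ 2 * ℓ < h₀ := by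
    refine lt_of_lt_of_le ?_ hh₀
    have hεK' : ε * K₁ ≤ 1 / 10 ^ 10 := by nlinarith [mul_le_mul_of_nonneg_left hεK hε.le]
    rw [← div_eq_inv_mul, lt_div_iff₀ (by linarith)]
    nlinarith [mul_le_mul_of_nonneg_left hεK' (by positivity : 0 ≤ ε * ℓ)]
  have hh₀pos : 0 ≤ h₀ := (by positivity : 0 ≤ ε ^ 2 * ℓ).trans hh₀ε.le
  have hx₀ : 0 < x := (by positivity : 0 ≤ ε ^ 2 * ℓ).trans_lt hXl
  set P := X - x • eLast n
  have hP : P (Fin.last n) = 0 := by simp [P, x]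
  have hPnorm : ‖P‖ < 6 * I ^ 2 * ℓ := by
    have := norm_sub_le X (x • eLast n)
    rw [norm_smul, norm_eLast, mul_one, Real.norm_eq_abs, abs_of_pos hx₀] at this
    linarith
  have hheight : ∀ k ≤ a + 1 + b, ε ^ 2 * ℓ < upDownHeight h₀ a k := fun k hk =>
    (lt_min hh₀ε (hXl.trans_le hs)).trans_le (min_le_upDownHeight hh₀pos hk)
  refine ⟨a + 1 + b, upDownPath P h₀ a, hN, upDownPath_zero P, fun k hk => ⟨?_, ?_⟩,
    fun k hk => ?_, ?_⟩
  · rw [upDownPath_last hP]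
    linarith [hheight k hk]
  · calc ‖upDownPath P h₀ a k‖ ≤ ‖P‖ + t := norm_upDownPath_le hh₀pos P
      _ ≤ I ^ 3 * ℓ := by nlinarith [mul_le_mul_of_nonneg_right hI (by positivity : 0 ≤ I ^ 2 * ℓ)]
  · refine (dist_upDownPath_succ_le hh₀pos P).trans_lt ?_
    rw [upDownPath_last hP]
    split_ifs with hka
    · rw [hka, show upDownHeight h₀ a a = t by simp [upDownHeight, t]]
      linarith
    · linarith [hheight k hk.le]
  · rw [upDownPath_end, show X = P + x • eLast n by simp [P], dist_add_smul_eLast,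
      abs_sub_comm, abs_of_nonneg (by linarith)]
    simp only [PiLp.add_apply, hP, PiLp.smul_apply, eLast_last, smul_eq_mul, mul_one, zero_add]
    linarith

lemma mul_rpow_half_le_sq_div_two {K ε M : ℝ} (hK : 1 ≤ K) (hε : 0 < ε)
    (hεK : 10 ^ 10 * K ≤ ε⁻¹) (hM : 10 ≤ M) : K * ε ^ (M / 2) ≤ ε ^ 2 / 2 := by
  have hεK' : K * ε ≤ 1 / 10 ^ 10 := by
    have := mul_le_mul_of_nonneg_left hεK hε.le
    rw [mul_inv_cancel₀ hε.ne'] at this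
    linarith
  have hε₁ : ε ≤ 1 := by nlinarith
  have hpow : ε ^ (M / 2) ≤ ε ^ 5 := by
    rw [← Real.rpow_natCast]
    exact Real.rpow_le_rpow_of_exponent_ge hε hε₁ (by push_cast; linarith)
  have hε₄ : ε ^ 4 ≤ ε ^ 2 := pow_le_pow_of_le_one hε.le hε₁ (by norm_num)
  calc K * ε ^ (M / 2) ≤ K * ε * ε ^ 4 := by
        rw [mul_assoc, ← pow_succ']; exact mul_le_mul_of_nonneg_left hpow (by linarith)
    _ ≤ 1 / 10 ^ 10 * ε ^ 2 := mul_le_mul hεK' hε₄ (by positivity) (by norm_num)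
    _ ≤ ε ^ 2 / 2 := by nlinarith [sq_nonneg ε]

theorem region_above_plane_connected_general (n : ℕ) (K₁ : ℝ) (hK₁ : 1 ≤ K₁) :
    ∃ ε₀ M₀ : ℝ, 0 < ε₀ ∧
      ∀ ε : ℝ, 0 < ε → ε < ε₀ → ∀ M : ℝ, M₀ ≤ M → ∀ ℓ : ℝ, 0 < ℓ →
      ∀ Ω : Set (ES n), IsOpen Ω → ∀ E : Set (ES n), E = frontier Ω →
      ∀ xQ ∈ E, ∀ Y : ES n, Y ∈ Ω →
        Y = Metric.infDist Y E • eLast n →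
        (0 : ES n) ∈ E → dist (0 : ES n) Y = Metric.infDist Y E →
        K₁⁻¹ * ℓ ≤ Metric.infDist Y E → Metric.infDist Y E ≤ K₁ * ℓ →
        dist Y xQ ≤ K₁ * ℓ →
        (∀ X : ES n, X ∈ Ω → ChainRel E ℓ ε X Y →
          ∀ w ∈ E, dist w X = Metric.infDist X E →
            |w (Fin.last n)| ≤ K₁ * ε ^ (M / 2) * ℓ) →
        (∀ X ∈ ball xQ (2 * ε ^ (-2 : ℤ) * ℓ) ∩ {W : ES n | ε ^ 2 * ℓ < W (Fin.last n)},
          ChainRel E ℓ ε X Y ∧ X ∈ Ω) ∧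
        (ball xQ (2 * ε ^ (-2 : ℤ) * ℓ) ∩ {W : ES n | ε ^ 2 * ℓ < W (Fin.last n)}) ∩ E = ∅ := by
  have hK₀ : 0 < 10 ^ 10 * K₁ := by linarith
  refine ⟨(10 ^ 10 * K₁)⁻¹, 10, inv_pos.2 hK₀, ?_⟩
  intro ε hε hεε₀ M hM ℓ hℓ Ω hΩ E hE xQ _ Y hYΩ hYe h0E h0Y hY₁ hY₂ hYxQ hflat
  have hεK : 10 ^ 10 * K₁ ≤ ε⁻¹ := ((lt_inv_comm₀ hε hK₀).1 hεε₀).le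
  have hYlast : Y (Fin.last n) = infDist Y E := by
    conv_lhs => rw [hYe]
    simp
  have hlow : ∀ Z ∈ Ω, ChainRel E ℓ ε Z Y → Z (Fin.last n) - ε ^ 2 * ℓ / 2 ≤ infDist Z E :=
    fun Z hZ hZY => apply_sub_le_infDist (hE ▸ isClosed_frontier) ⟨0, h0E⟩ Z _ fun w hw hwZ =>
      (hflat Z hZ hZY w hw hwZ).trans (by
        nlinarith [mul_le_mul_of_nonneg_right (mul_rpow_half_le_sq_div_two hK₁ hε hεK hM) hℓ.le])
  have hregion : ∀ X ∈ ball xQ (2 * ε ^ (-2 : ℤ) * ℓ) ∩ {W : ES n | ε ^ 2 * ℓ < W (Fin.last n)},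
      ChainRel E ℓ ε X Y ∧ X ∈ Ω := by
    rintro X ⟨hXQ, hXl⟩
    have hX : ‖X‖ < 3 * ε⁻¹ ^ 2 * ℓ := by
      have hKε : 2 * K₁ * ℓ ≤ ε⁻¹ ^ 2 * ℓ := by gcongr; nlinarith
      have := dist_triangle4 X xQ Y 0
      rw [mem_ball, zpow_neg, zpow_ofNat, ← inv_pow] at hXQ
      rw [dist_zero_right, dist_comm xQ Y, dist_comm Y 0, h0Y] at this
      linarith
    obtain ⟨N, c, hN, hc0, hadm, hstep, hXc⟩ := exists_upDown_chain hK₁ hε hεK hℓ hY₁ hY₂ hX hXl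
    rw [← hYe] at hc0
    obtain ⟨hXΩ, hXY⟩ := mem_and_chainRel_of_height_steps hΩ hE hε hℓ hN (hc0 ▸ hlow)
      (hc0 ▸ hYΩ) (by rw [hc0, hYlast]; linarith [(by positivity : 0 ≤ ε ^ 2 * ℓ)])
      (fun k hk => (hadm k hk).1)
      (fun k hk => (infDist_le_dist_of_mem h0E).trans ((dist_zero_right _).trans_le (hadm k hk).2))
      hstep hXc
    exact ⟨hc0 ▸ hXY, hXΩ⟩
  refine ⟨hregion, eq_empty_of_forall_notMem fun X ⟨hXO, hXE⟩ => ?_⟩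
  rw [hE, hΩ.frontier_eq] at hXE
  exact hXE.2 (hregion X hXO).2

/-- Claim 5.40 and (5.41). Under the flatness hypothesis that every
boundary point touching an admissible ball centered at a point chain-connected to `Y` lies
at height at most `K₁ε^{M/2}ℓ`, every point of the region
`𝒪 = B(x_Q, 2ε⁻²ℓ) ∩ {W_{n+1} > ε²ℓ}` is chain-connected to `Y`; in particular `𝒪 ⊆ Ω`
and `𝒪 ∩ E = ∅`. -/
theorem region_above_plane_connected (n : ℕ) (hn : 2 ≤ n) (K₁ : ℝ) (hK₁ : 1 ≤ K₁) :
    ∃ ε₀ M₀ : ℝ, 0 < ε₀ ∧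
      ∀ ε : ℝ, 0 < ε → ε < ε₀ → ∀ M : ℝ, M₀ ≤ M → ∀ ℓ : ℝ, 0 < ℓ →
      ∀ Ω : Set (ES n), IsOpen Ω → ∀ E : Set (ES n), E = frontier Ω →
      ∀ xQ ∈ E, ∀ Y : ES n, Y ∈ Ω →
        Y = Metric.infDist Y E • eLast n →
        (0 : ES n) ∈ E → dist (0 : ES n) Y = Metric.infDist Y E →
        K₁⁻¹ * ℓ ≤ Metric.infDist Y E → Metric.infDist Y E ≤ K₁ * ℓ →
        dist Y xQ ≤ K₁ * ℓ →
        (∀ X : ES n, X ∈ Ω → ChainRel E ℓ ε X Y →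
          ∀ w ∈ E, dist w X = Metric.infDist X E →
            |w (Fin.last n)| ≤ K₁ * ε ^ (M / 2) * ℓ) →
        (∀ X ∈ ball xQ (2 * ε ^ (-2 : ℤ) * ℓ) ∩ {W : ES n | ε ^ 2 * ℓ < W (Fin.last n)},
          ChainRel E ℓ ε X Y ∧ X ∈ Ω) ∧
        (ball xQ (2 * ε ^ (-2 : ℤ) * ℓ) ∩ {W : ES n | ε ^ 2 * ℓ < W (Fin.last n)}) ∩ E = ∅ :=
  region_above_plane_connected_general n K₁ hK₁
end
end

section
/- Let E ⊆ ℝ^{n+1} be an n-dimensional Ahlfors–David regular set with dyadic system 𝔻(E), σ := H^n|_E, and fix K₀ ≥ 1 and ε ∈ (0,1). Let ℬ₀ ⊆ 𝔻(E) be a collection of cubes satisfying the packing condition ∑_{Q'⊆Q, Q'∈ℬ₀} σ(Q') ≤ C₁ σ(Q) for every Q ∈ 𝔻(E). For each Q ∈ 𝔻(E) define α_Q := σ(Q) if ℬ₀ ∩ 𝔻_ε(Q) ≠ ∅, and α_Q := 0 otherwise. Then ∑_{Q ⊆ Q₀} α_Q ≤ C_ε σ(Q₀) for every Q₀ ∈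 𝔻(E), where C_ε depends only on n, the ADR and dyadic constants, K₀, ε and C₁. -/
open MeasureTheory Metric Set
open scoped ENNReal NNReal InnerProductSpace

noncomputable section

/-- The surface measure `σ = H^n|_E`. -/
def surfMeasure (n : ℕ) (E : Set (ES n)) : Measure (ES n) :=
  (μH[(n : ℝ)]).restrict E

/-- `E ⊆ ℝ^{n+1}` is `n`-dimensional Ahlfors–David regular with constant `C`. -/
def IsADR (n : ℕ) (C : ℝ) (E : Set (ES n)) : Prop :=
  IsClosed E ∧ 1 ≤ C ∧
    ∀ x ∈ E, ∀ r : ℝ, 0 < r → ENNReal.ofReal r < EMetric.diam E →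
      ENNReal.ofReal (C⁻¹ * r ^ n) ≤ μH[(n : ℝ)] (E ∩ ball x r) ∧
      μH[(n : ℝ)] (E ∩ ball x r) ≤ ENNReal.ofReal (C * r ^ n)

/-- A Christ–David–Semmes dyadic system on `E`. -/
structure DyadicSystem (n : ℕ) (E : Set (ES n)) where
  cubes : ℤ → Set (Set (ES n))
  center : Set (ES n) → ES n
  a₀ : ℝ
  γ : ℝ
  Cstar : ℝ
  a₀_pos : 0 < a₀
  γ_pos : 0 < γ
  Cstar_pos : 0 < Cstar
  borel : ∀ k : ℤ, ∀ Q ∈ cubes k, MeasurableSet Q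
  cover : ∀ k : ℤ, ⋃₀ cubes k = E
  nested : ∀ k m : ℤ, k ≤ m → ∀ Q ∈ cubes m, ∀ Q' ∈ cubes k, Q ⊆ Q' ∨ Q ∩ Q' = ∅
  parent : ∀ k : ℤ, ∀ Q ∈ cubes k, ∀ m : ℤ, m < k → ∃! Q', Q' ∈ cubes m ∧ Q ⊆ Q'
  diam_le : ∀ k : ℤ, ∀ Q ∈ cubes k, EMetric.diam Q ≤ ENNReal.ofReal (Cstar * 2 ^ (-k))
  center_mem : ∀ k : ℤ, ∀ Q ∈ cubes k, center Q ∈ Q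
  contains_ball : ∀ k : ℤ, ∀ Q ∈ cubes k, E ∩ ball (center Q) (a₀ * 2 ^ (-k)) ⊆ Q
  small_boundary : ∀ k : ℤ, ∀ Q ∈ cubes k, ∀ ϱ : ℝ, 0 < ϱ → ϱ < a₀ →
    μH[(n : ℝ)] {x ∈ Q | Metric.infDist x (E \ Q) ≤ ϱ * 2 ^ (-k)} ≤
      ENNReal.ofReal (Cstar * ϱ ^ γ) * μH[(n : ℝ)] Q

/-- Uniform rectifiability: big pieces of Lipschitz images. -/
def IsUR (n : ℕ) (θ M₀ : ℝ) (E : Set (ES n)) : Prop :=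
  0 < θ ∧ 0 < M₀ ∧
    ∀ x ∈ E, ∀ r : ℝ, 0 < r → ENNReal.ofReal r < EMetric.diam E →
      ∃ ρ : EuclideanSpace ℝ (Fin n) → ES n,
        LipschitzWith M₀.toNNReal ρ ∧
        ENNReal.ofReal (θ * r ^ n) ≤ μH[(n : ℝ)] (E ∩ ball x r ∩ ρ '' ball 0 r)

/-- `P` is an affine hyperplane of `ℝ^{n+1}`. -/
def IsHyperplane {n : ℕ} (P : Set (ES n)) : Prop :=
  ∃ (ν : ES n) (c : ℝ), ‖ν‖ = 1 ∧ P = {Z | ⟪ν, Z⟫_ℝ = c}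

/-- `H` is an open half-space with boundary hyperplane `P`. -/
def IsHalfSpacePair {n : ℕ} (H P : Set (ES n)) : Prop :=
  ∃ (ν : ES n) (c : ℝ), ‖ν‖ = 1 ∧ H = {Z | c < ⟪ν, Z⟫_ℝ} ∧ P = {Z | ⟪ν, Z⟫_ℝ = c}

/-- The `ε`-local BAUP condition for a cube `Q` of generation `k`. -/
def LocalBAUP {n : ℕ} (E : Set (ES n)) (D : DyadicSystem n E) (ε : ℝ) (k : ℤ)
    (Q : Set (ES n)) : Prop :=
  ∃ Ps : Set (Set (ES n)), Ps.Nonempty ∧ (∀ P ∈ Ps, IsHyperplane P) ∧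
    (∀ y ∈ E ∩ ball (D.center Q) (10 * Metric.diam Q),
      Metric.infDist y (⋃₀ Ps) ≤ ε * 2 ^ (-k)) ∧
    (∀ z ∈ (⋃₀ Ps) ∩ ball (D.center Q) (10 * Metric.diam Q),
      Metric.infDist z E ≤ ε * 2 ^ (-k))

/-- The `ε`-local WHSA condition with parameter `K₀` for a cube `Q` of generation `k`. -/
def LocalWHSA {n : ℕ} (E : Set (ES n)) (D : DyadicSystem n E) (K₀ ε : ℝ) (k : ℤ)
    (Q : Set (ES n)) : Prop :=
  ∃ Hs P : Set (ES n), IsHalfSpacePair Hs P ∧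
    (∀ Z ∈ P ∩ ball (D.center Q) (ε ^ (-2 : ℤ) * 2 ^ (-k)),
      Metric.infDist Z E ≤ ε * 2 ^ (-k)) ∧
    (∃ z ∈ closure Q, Metric.infDist z P ≤ K₀ ^ ((3 : ℝ) / 2) * 2 ^ (-k)) ∧
    Hs ∩ ball (D.center Q) (ε ^ (-2 : ℤ) * 2 ^ (-k)) ∩ E = ∅

/-- The family of (generations of) cubes `B` satisfies a Carleson packing condition with
constant `C`. -/
def PackedBy {n : ℕ} (E : Set (ES n)) (D : DyadicSystem n E)
    (B : ℤ → Set (ES n) → Prop) (C : ℝ) : Prop :=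
  ∀ k₀ : ℤ, ∀ Q₀ ∈ D.cubes k₀,
    ∑' p : {p : ℤ × Set (ES n) // p.2 ∈ D.cubes p.1 ∧ B p.1 p.2 ∧ p.2 ⊆ Q₀},
      μH[(n : ℝ)] p.1.2 ≤ ENNReal.ofReal C * μH[(n : ℝ)] Q₀

/-- Harmonic: `C²` with vanishing Laplacian. -/
def HarmonicOn {n : ℕ} (u : ES n → ℝ) (U : Set (ES n)) : Prop :=
  ContDiffOn ℝ 2 u U ∧ ∀ x ∈ U,
    ∑ i : Fin (n + 1),
      fderiv ℝ (fun y => fderiv ℝ u y (EuclideanSpace.single i 1)) x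
        (EuclideanSpace.single i 1) = 0

/-!
Fix `M` with `2^{-M} ≤ ε^{3/2}`, so that a cube `Q' ∈ 𝔻_ε(Q)` lies between the generation
of `Q` and `M` generations below it. Charge every cube `Q ⊆ Q₀` with `α_Q ≠ 0` to some
`Q' ∈ ℬ₀ ∩ 𝔻_ε(Q)`. The cubes of one generation charged to a fixed `Q'` are disjoint and
lie in a ball of radius `≈ ℓ(Q) ≈_M ℓ(Q')` around `x_{Q'}`, so by Ahlfors–David regularity
their total measure is `≲ σ(Q')`; only `M + 1` generations occur. The charged cubes `Q'`
meet a fixed dilate of `B_{Q₀}` and are not larger than `Q₀`, so each lies in an ancestor `R`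
one generation above `Q₀` meeting that dilate. The packing condition gives
`∑_{Q' ⊆ R} σ(Q') ≤ C₁ σ(R)`, and the disjoint cubes `R` fill a ball of radius
`≈ ℓ(Q₀)`, whose measure is `≲ σ(Q₀)` again by regularity.
-/

theorem encard_le_of_isSeparated_of_subset_closedBall {V : Type*} [NormedAddCommGroup V]
    [NormedSpace ℝ V] [FiniteDimensional ℝ V] {C : Set V} {y : V} {d : ℝ≥0}
    (hd : 0 < d) (hC : C ⊆ closedBall y d)
    (hsep : IsSeparated ((d / 2 : ℝ≥0) : ℝ≥0∞) C) :
    C.encard ≤ 5 ^ Module.finrank ℝ V := by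
  classical
  by_contra! h
  obtain ⟨t, htC, htcard⟩ := Set.exists_subset_encard_eq (Order.add_one_le_of_lt h)
  have htfin : t.Finite := Set.finite_of_encard_eq_coe (k := 5 ^ Module.finrank ℝ V + 1)
    (by simpa using htcard)
  have hd' : (0 : ℝ) < d := hd
  -- rescaling by `2 / d` maps `t` to a `1`-separated subset of the ball of radius `2`
  set φ : V → V := fun c => ((2 : ℝ) / d) • (c - y)
  have hφ : ∀ c c', ‖φ c - φ c'‖ = 2 / d * dist c c' := fun c c' => by
    rw [← smul_sub, sub_sub_sub_cancel_right, norm_smul, Real.norm_of_nonneg (by positivity),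
      dist_eq_norm]
  have hφinj : φ.Injective := (smul_right_injective V (by positivity)).comp sub_left_injective
  have hcard := Besicovitch.card_le_of_separated (htfin.toFinset.image φ) ?_ ?_
  · rw [Finset.card_image_of_injective _ hφinj] at hcard
    have : (htfin.toFinset.card : ℕ∞) = 5 ^ Module.finrank ℝ V + 1 :=
      htfin.encard_eq_coe_toFinset_card ▸ htcard
    have : htfin.toFinset.card = 5 ^ Module.finrank ℝ V + 1 := by exact_mod_cast this
    omega
  · simp only [Finset.mem_image, Set.Finite.mem_toFinset]
    rintro _ ⟨c, hc, rfl⟩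
    calc ‖φ c‖ = 2 / d * dist c y := by rw [← hφ, show φ y = 0 by simp [φ], sub_zero]
      _ ≤ 2 / d * d := by gcongr; exact hC (htC hc)
      _ = 2 := by field_simp
  · simp only [Finset.mem_image, Set.Finite.mem_toFinset]
    rintro _ ⟨c, hc, rfl⟩ _ ⟨c', hc', rfl⟩ hne
    have hlt : ((d / 2 : ℝ≥0) : ℝ≥0∞) < edist c c' :=
      hsep (htC hc) (htC hc') fun h => hne (h ▸ rfl)
    rw [edist_nndist, ENNReal.coe_lt_coe, ← NNReal.coe_lt_coe, coe_nndist] at hlt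
    push_cast at hlt
    calc (1 : ℝ) = 2 / d * (d / 2) := by field_simp
      _ ≤ ‖φ c - φ c'‖ := by rw [hφ]; gcongr

def adrDoublingConst (n : ℕ) (C Λ : ℝ) : ℝ := max 1 (C ^ 2 * 5 ^ (n + 1) * (2 * Λ) ^ n)

theorem one_le_adrDoublingConst (n : ℕ) (C Λ : ℝ) : 1 ≤ adrDoublingConst n C Λ :=
  le_max_left _ _

namespace IsADR

variable {n : ℕ} {C : ℝ} {E : Set (ES n)}

theorem measure_inter_ball_le (hE : IsADR n C E) (hdiam : 0 < ediam E) {y : ES n}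
    (hy : y ∈ E) {r : ℝ} (hr : 0 < r) :
    μH[(n : ℝ)] (E ∩ ball y r) ≤ ENNReal.ofReal (C * 5 ^ (n + 1) * r ^ n) := by
  obtain ⟨-, hC, hADR⟩ := hE
  rcases lt_or_ge (ENNReal.ofReal r) (ediam E) with hr' | hr'
  · refine (hADR y hy r hr hr').2.trans (ENNReal.ofReal_le_ofReal ?_)
    have : (1 : ℝ) ≤ 5 ^ (n + 1) := one_le_pow₀ (by norm_num)
    have : 0 ≤ C * r ^ n := by positivity
    nlinarith
  -- `E` has finite diameter `d ≤ r`: cover it by boundedly many balls of radius `3d/4`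
  set d : ℝ≥0 := (ediam E).toNNReal
  have hdE : ediam E = d :=
    (ENNReal.coe_toNNReal (ne_top_of_le_ne_top ENNReal.ofReal_ne_top hr')).symm
  have hd : 0 < d := by rw [hdE] at hdiam; exact_mod_cast hdiam
  have hd' : (0 : ℝ) < d := hd
  have hdr : (d : ℝ) ≤ r := ENNReal.toReal_le_of_le_ofReal hr.le (hdE ▸ hr')
  have hEball : E ⊆ closedBall y d := fun p hp => by
    have := Metric.edist_le_ediam_of_mem hp hy
    rwa [hdE, edist_le_coe, ← dist_le_coe] at this
  have hpack : packingNumber (d / 2) E ≤ 5 ^ (n + 1) :=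
    iSup₂_le fun G hG => iSup_le fun hsep =>
      (encard_le_of_isSeparated_of_subset_closedBall hd (hG.trans hEball) hsep).trans_eq
        (by rw [finrank_euclideanSpace_fin])
  have hfin : packingNumber (d / 2) E ≠ ⊤ := ne_top_of_le_ne_top (by simp) hpack
  set G := maximalSeparatedSet (d / 2) E
  have hGfin : G.Finite :=
    Set.encard_ne_top_iff.mp (encard_maximalSeparatedSet hfin ▸ hfin)
  have hcover : E ⊆ ⋃ c ∈ G, E ∩ ball c (3 / 4 * d) := by
    intro p hp
    obtain ⟨c, hc, hpc⟩ := isCover_maximalSeparatedSet hfin hp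
    refine mem_biUnion hc ⟨hp, mem_ball.mpr ?_⟩
    have : dist p c ≤ (d / 2 : ℝ≥0) := dist_le_coe.mpr (edist_le_coe.mp hpc)
    push_cast at this
    linarith
  have hball : ∀ c ∈ G, μH[(n : ℝ)] (E ∩ ball c (3 / 4 * d))
      ≤ ENNReal.ofReal (C * (3 / 4 * d) ^ n) := by
    intro c hc
    refine (hADR c (maximalSeparatedSet_subset hc) _ (by positivity) ?_).2
    change _ < ediam E
    rw [hdE, ← ENNReal.ofReal_coe_nnreal]
    exact ENNReal.ofReal_lt_ofReal_iff_of_nonneg (by positivity) |>.mpr (by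
      linarith)
  calc μH[(n : ℝ)] (E ∩ ball y r) ≤ μH[(n : ℝ)] (⋃ c ∈ G, E ∩ ball c (3 / 4 * d)) :=
        measure_mono (inter_subset_left.trans hcover)
    _ ≤ ∑' c : G, μH[(n : ℝ)] (E ∩ ball c (3 / 4 * d)) :=
        measure_biUnion_le _ hGfin.countable _
    _ ≤ ∑' _ : G, ENNReal.ofReal (C * (3 / 4 * d) ^ n) :=
        ENNReal.tsum_le_tsum fun c => hball c c.2
    _ = G.encard * ENNReal.ofReal (C * (3 / 4 * d) ^ n) := by
        rw [ENNReal.tsum_const, ENat.card_coe_set_eq]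
    _ ≤ ((5 ^ (n + 1) : ℕ∞) : ℝ≥0∞) * ENNReal.ofReal (C * r ^ n) := by
        gcongr
        · exact encard_maximalSeparatedSet hfin ▸ hpack
        · linarith
    _ = ENNReal.ofReal (C * 5 ^ (n + 1) * r ^ n) := by
        rw [show C * 5 ^ (n + 1) * r ^ n = 5 ^ (n + 1) * (C * r ^ n) by ring,
          ENNReal.ofReal_mul (p := 5 ^ (n + 1)) (by positivity)]
        congr 1
        norm_num

theorem measure_inter_ball_le_mul (hE : IsADR n C E) {y : ES n} (hy : y ∈ E) {s R Λ : ℝ}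
    (hs : 0 < s) (hR : R ≤ Λ * s) :
    μH[(n : ℝ)] (E ∩ ball y R) ≤
      ENNReal.ofReal (adrDoublingConst n C Λ) * μH[(n : ℝ)] (E ∩ ball y s) := by
  rcases le_or_gt R 0 with hR0 | hR0
  · simp [ball_eq_empty.mpr hR0]
  have hC : 1 ≤ C := hE.2.1
  rcases lt_or_ge (ENNReal.ofReal (s / 2)) (ediam E) with hs' | hs'
  · have hlower : ENNReal.ofReal (C⁻¹ * (s / 2) ^ n) ≤ μH[(n : ℝ)] (E ∩ ball y s) :=
      (hE.2.2 y hy (s / 2) (by positivity) hs').1.trans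
        (measure_mono (inter_subset_inter_right _ (ball_subset_ball (by linarith))))
    calc μH[(n : ℝ)] (E ∩ ball y R) ≤ ENNReal.ofReal (C * 5 ^ (n + 1) * R ^ n) :=
          hE.measure_inter_ball_le (pos_of_gt hs') hy hR0
      _ ≤ ENNReal.ofReal (C * 5 ^ (n + 1) * (Λ * s) ^ n) := by gcongr
      _ = ENNReal.ofReal (C ^ 2 * 5 ^ (n + 1) * (2 * Λ) ^ n) *
            ENNReal.ofReal (C⁻¹ * (s / 2) ^ n) := by
          rw [← ENNReal.ofReal_mul' (by positivity), show Λ * s = 2 * Λ * (s / 2) by ring,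
            mul_pow]
          congr 1
          field_simp
      _ ≤ _ := by gcongr; exact le_max_right _ _
  · have hEs : E ⊆ ball y s := fun p hp => by
      have := (Metric.edist_le_ediam_of_mem hp hy).trans hs'
      rw [edist_le_ofReal (by positivity)] at this
      exact mem_ball.mpr (by linarith)
    calc μH[(n : ℝ)] (E ∩ ball y R) ≤ 1 * μH[(n : ℝ)] (E ∩ ball y s) := by
          rw [one_mul]
          exact measure_mono fun p hp => ⟨hp.1, hEs hp.1⟩
      _ ≤ _ := by gcongr; exact ENNReal.one_le_ofReal.mpr (le_max_left _ _)

end IsADR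

namespace DyadicSystem

variable {n : ℕ} {E : Set (ES n)} (D : DyadicSystem n E)

theorem subset_of_mem {k : ℤ} {Q : Set (ES n)} (hQ : Q ∈ D.cubes k) : Q ⊆ E :=
  D.cover k ▸ subset_sUnion_of_mem hQ

theorem dist_le {k : ℤ} {Q : Set (ES n)} (hQ : Q ∈ D.cubes k) {p q : ES n} (hp : p ∈ Q)
    (hq : q ∈ Q) : dist p q ≤ D.Cstar * 2 ^ (-k) := by
  have h := (Metric.edist_le_ediam_of_mem hp hq).trans (D.diam_le k Q hQ)
  rwa [edist_le_ofReal (mul_nonneg D.Cstar_pos.le (zpow_nonneg zero_le_two _))] at h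

theorem disjoint_of_ne {k : ℤ} {Q Q' : Set (ES n)} (hQ : Q ∈ D.cubes k) (hQ' : Q' ∈ D.cubes k)
    (hne : Q ≠ Q') : Disjoint Q Q' := by
  rcases D.nested k k le_rfl Q hQ Q' hQ' with h | h
  · rcases D.nested k k le_rfl Q' hQ' Q hQ with h' | h'
    · exact absurd (h.antisymm h') hne
    · exact Set.disjoint_iff_inter_eq_empty.mpr (Set.inter_comm Q Q' ▸ h')
  · exact Set.disjoint_iff_inter_eq_empty.mpr h

theorem eq_of_subset_of_le {k k₀ : ℤ} {Q Q₀ : Set (ES n)} (hk : k ≤ k₀)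
    (hQ : Q ∈ D.cubes k) (hQ₀ : Q₀ ∈ D.cubes k₀) (hsub : Q ⊆ Q₀) : Q = Q₀ := by
  rcases D.nested k k₀ hk Q₀ hQ₀ Q hQ with h | h
  · exact hsub.antisymm h
  · have hc := D.center_mem k Q hQ
    exact (eq_empty_iff_forall_notMem.mp h _ ⟨hsub hc, hc⟩).elim

theorem eq_of_forall_exists_mem_cubes_lt {Q : Set (ES n)}
    (hQ : ∀ j : ℤ, ∃ k < j, Q ∈ D.cubes k) : Q = E := by
  obtain ⟨k₀, -, hk₀⟩ := hQ 0
  refine (D.subset_of_mem hk₀).antisymm fun x hx => ?_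
  obtain ⟨N, hN⟩ := pow_unbounded_of_one_lt (dist x (D.center Q) / D.a₀) one_lt_two
  obtain ⟨k, hk, hQk⟩ := hQ (-N)
  refine D.contains_ball k Q hQk ⟨hx, mem_ball.mpr ?_⟩
  calc dist x (D.center Q) < D.a₀ * 2 ^ N := by
        rwa [div_lt_iff₀ D.a₀_pos, mul_comm] at hN
    _ = D.a₀ * 2 ^ (N : ℤ) := by rw [zpow_natCast]
    _ ≤ D.a₀ * 2 ^ (-k) :=
        mul_le_mul_of_nonneg_left (zpow_le_zpow_right₀ one_le_two (by omega)) D.a₀_pos.le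

theorem eq_or_exists_forall_le {k₀ : ℤ} {Q₀ : Set (ES n)} (hQ₀ : Q₀ ∈ D.cubes k₀)
    (S : Set (ℤ × Set (ES n))) (hS : ∀ p ∈ S, p.2 ∈ D.cubes p.1 ∧ p.2 ⊆ Q₀) :
    Q₀ = E ∨ ∃ m, Q₀ ∈ D.cubes m ∧ ∀ p ∈ S, m ≤ p.1 := by
  classical
  by_cases h : ∀ j : ℤ, ∃ k < j, Q₀ ∈ D.cubes k
  · exact Or.inl (D.eq_of_forall_exists_mem_cubes_lt h)
  push Not at h
  obtain ⟨j, hj⟩ := h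
  obtain ⟨m, hm, hmin⟩ := Int.exists_least_of_bdd
    ⟨j, fun k hk => not_lt.mp fun hlt => hj k hlt hk⟩ ⟨k₀, hQ₀⟩
  refine Or.inr ⟨m, hm, fun p hp => ?_⟩
  rcases le_or_gt k₀ p.1 with h | h
  · exact (hmin k₀ hQ₀).trans h
  · have hpQ₀ : p.2 = Q₀ := D.eq_of_subset_of_le h.le (hS p hp).1 hQ₀ (hS p hp).2
    exact hmin _ (hpQ₀ ▸ (hS p hp).1)

/-- `q ∈ 𝔻_ε(p)` in the paper's notation, for cubes paired with their generation, with the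
scale condition `ε^{3/2} ℓ(p) ≤ ℓ(q)` replaced by `2^{-M} ℓ(p) ≤ ℓ(q)`. -/
def IsNear (K₀ : ℝ) (M : ℕ) (p q : ℤ × Set (ES n)) : Prop :=
  p.1 ≤ q.1 ∧ q.1 ≤ p.1 + M ∧ (q.2 ∩ ball (D.center p.2) (K₀ ^ 2 * 2 ^ (-p.1))).Nonempty

/-- The cubes `Q` with `α_Q ≠ 0` in the paper's notation, for the family `ℬ₀ = B`. -/
def nearFamily (B : ℤ → Set (ES n) → Prop) (K₀ : ℝ) (M : ℕ) (k : ℤ) (Q : Set (ES n)) :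
    Prop :=
  ∃ q : ℤ × Set (ES n), q.2 ∈ D.cubes q.1 ∧ B q.1 q.2 ∧ D.IsNear K₀ M (k, Q) q

variable {C K₀ : ℝ} {M : ℕ}

theorem tsum_measure_isNear_of_fst_eq_le (hE : IsADR n C E) {q : ℤ × Set (ES n)}
    (hq : q.2 ∈ D.cubes q.1) (k : ℤ) :
    ∑' p : {p : ℤ × Set (ES n) | p.1 = k ∧ p.2 ∈ D.cubes p.1 ∧ D.IsNear K₀ M p q},
        μH[(n : ℝ)] p.1.2 ≤
      ENNReal.ofReal (adrDoublingConst n C ((K₀ ^ 2 + 2 * D.Cstar) * 2 ^ M / D.a₀)) *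
        μH[(n : ℝ)] q.2 := by
  set P := {p : ℤ × Set (ES n) | p.1 = k ∧ p.2 ∈ D.cubes p.1 ∧ D.IsNear K₀ M p q}
  rcases isEmpty_or_nonempty P with h | ⟨⟨p₀, hp₀, -, hk, hkM, -⟩⟩
  · simp
  rw [hp₀] at hk hkM
  have hz : D.center q.2 ∈ E := D.subset_of_mem hq (D.center_mem _ _ hq)
  have hsub : ∀ p ∈ P,
      p.2 ⊆ E ∩ ball (D.center q.2) ((K₀ ^ 2 + 2 * D.Cstar) * 2 ^ (-k)) := by
    rintro p ⟨rfl, hQ, -, -, w, hwq, hwQ⟩ x hx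
    refine ⟨D.subset_of_mem hQ hx, mem_ball.mpr ?_⟩
    have h₁ := D.dist_le hQ hx (D.center_mem _ _ hQ)
    have h₂ := D.dist_le hq hwq (D.center_mem _ _ hq)
    have h₃ : D.Cstar * 2 ^ (-q.1) ≤ D.Cstar * 2 ^ (-p.1) :=
      mul_le_mul_of_nonneg_left (zpow_le_zpow_right₀ one_le_two (by omega)) D.Cstar_pos.le
    linarith [dist_triangle4 x (D.center p.2) w (D.center q.2), mem_ball'.mp hwQ]
  have hdisj : Pairwise fun p p' : P => Disjoint p.1.2 p'.1.2 := by
    intro p p' hne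
    obtain ⟨hpk, hp, -⟩ := p.2
    obtain ⟨hpk', hp', -⟩ := p'.2
    rw [hpk] at hp
    rw [hpk'] at hp'
    exact D.disjoint_of_ne hp hp' fun h => hne (Subtype.ext (Prod.ext (hpk.trans hpk'.symm) h))
  have hradius : (K₀ ^ 2 + 2 * D.Cstar) * 2 ^ (-k) ≤
      (K₀ ^ 2 + 2 * D.Cstar) * 2 ^ M / D.a₀ * (D.a₀ * 2 ^ (-q.1)) := by
    have h2 : (2 : ℝ) ^ (-k) ≤ 2 ^ M * 2 ^ (-q.1) := by
      rw [← zpow_natCast, ← zpow_add₀ two_ne_zero]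
      exact zpow_le_zpow_right₀ one_le_two (by omega)
    have hC : 0 ≤ K₀ ^ 2 + 2 * D.Cstar := by nlinarith [D.Cstar_pos]
    calc (K₀ ^ 2 + 2 * D.Cstar) * 2 ^ (-k) ≤ (K₀ ^ 2 + 2 * D.Cstar) * (2 ^ M * 2 ^ (-q.1)) :=
          mul_le_mul_of_nonneg_left h2 hC
      _ = _ := by field_simp [D.a₀_pos.ne']
  calc _ ≤ μH[(n : ℝ)] (⋃ p : P, p.1.2) :=
        tsum_meas_le_meas_iUnion_of_disjoint _ (fun p => D.borel _ _ p.2.2.1) hdisj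
    _ ≤ μH[(n : ℝ)] (E ∩ ball (D.center q.2) ((K₀ ^ 2 + 2 * D.Cstar) * 2 ^ (-k))) :=
        measure_mono (iUnion_subset fun p => hsub p p.2)
    _ ≤ _ := hE.measure_inter_ball_le_mul hz (mul_pos D.a₀_pos (zpow_pos two_pos _)) hradius
    _ ≤ _ := by gcongr; exact D.contains_ball _ _ hq

theorem tsum_measure_isNear_le (hE : IsADR n C E) {q : ℤ × Set (ES n)}
    (hq : q.2 ∈ D.cubes q.1) :
    ∑' p : {p : ℤ × Set (ES n) | p.2 ∈ D.cubes p.1 ∧ D.IsNear K₀ M p q},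
        μH[(n : ℝ)] p.1.2 ≤
      ENNReal.ofReal ((M + 1) * adrDoublingConst n C ((K₀ ^ 2 + 2 * D.Cstar) * 2 ^ M / D.a₀)) *
        μH[(n : ℝ)] q.2 := by
  set A := adrDoublingConst n C ((K₀ ^ 2 + 2 * D.Cstar) * 2 ^ M / D.a₀)
  set F : ℤ → Set (ℤ × Set (ES n)) :=
    fun k => {p | p.1 = k ∧ p.2 ∈ D.cubes p.1 ∧ D.IsNear K₀ M p q}
  have hcover : {p : ℤ × Set (ES n) | p.2 ∈ D.cubes p.1 ∧ D.IsNear K₀ M p q} ⊆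
      ⋃ k ∈ Finset.Icc (q.1 - M) q.1, F k :=
    fun p hp => mem_biUnion (x := p.1)
      (Finset.mem_Icc.mpr (by obtain ⟨-, h₁, h₂, -⟩ := hp; omega)) ⟨rfl, hp⟩
  refine (ENNReal.tsum_mono_subtype (fun p => μH[(n : ℝ)] p.2) hcover).trans
    ((ENNReal.tsum_biUnion_le (fun p => μH[(n : ℝ)] p.2) _ F).trans ?_)
  calc ∑ k ∈ Finset.Icc (q.1 - M) q.1, ∑' p : F k, μH[(n : ℝ)] p.1.2
      ≤ ∑ _k ∈ Finset.Icc (q.1 - M) q.1, ENNReal.ofReal A * μH[(n : ℝ)] q.2 :=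
        Finset.sum_le_sum fun k _ => D.tsum_measure_isNear_of_fst_eq_le hE hq k
    _ = _ := by
        rw [Finset.sum_const, Int.card_Icc, show q.1 + 1 - (q.1 - M) = (M + 1 : ℕ) by omega,
          Int.toNat_natCast, nsmul_eq_mul, ENNReal.ofReal_mul (by positivity), ← mul_assoc]
        norm_cast

end DyadicSystem

namespace PackedBy

variable {n : ℕ} {E : Set (ES n)} {D : DyadicSystem n E} {B : ℤ → Set (ES n) → Prop}
  {C₁ : ℝ}

theorem tsum_measure_le (hB : PackedBy E D B C₁) {k : ℤ} {Q : Set (ES n)} (hQ : Q ∈ D.cubes k)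
    {T : Set (ℤ × Set (ES n))}
    (hT : ∀ t ∈ T, t.2 ∈ D.cubes t.1 ∧ B t.1 t.2 ∧ t.2 ⊆ Q) :
    ∑' t : T, μH[(n : ℝ)] t.1.2 ≤ ENNReal.ofReal C₁ * μH[(n : ℝ)] Q :=
  (ENNReal.tsum_mono_subtype (fun t : ℤ × Set (ES n) => μH[(n : ℝ)] t.2)
    (t := {p | p.2 ∈ D.cubes p.1 ∧ B p.1 p.2 ∧ p.2 ⊆ Q}) hT).trans (hB k Q hQ)

theorem mono {B' : ℤ → Set (ES n) → Prop} (hB : PackedBy E D B C₁)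
    (hB' : ∀ k Q, B' k Q → B k Q) : PackedBy E D B' C₁ :=
  fun _ Q hQ => hB.tsum_measure_le hQ (T := {p | p.2 ∈ D.cubes p.1 ∧ B' p.1 p.2 ∧ p.2 ⊆ Q})
    fun _ ht => ⟨ht.1, hB' _ _ ht.2.1, ht.2.2⟩

theorem tsum_measure_le_of_meets_ball {C : ℝ} (hE : IsADR n C E) (hB : PackedBy E D B C₁)
    {m : ℤ} {Q₀ : Set (ES n)} (hQ₀ : Q₀ ∈ D.cubes m) {r : ℝ}
    {T : Set (ℤ × Set (ES n))}
    (hT : ∀ t ∈ T, t.2 ∈ D.cubes t.1 ∧ B t.1 t.2 ∧ m ≤ t.1 ∧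
      (t.2 ∩ ball (D.center Q₀) (r * 2 ^ (-m))).Nonempty) :
    ∑' t : T, μH[(n : ℝ)] t.1.2 ≤
      ENNReal.ofReal C₁ * ENNReal.ofReal (adrDoublingConst n C ((r + 2 * D.Cstar) / D.a₀)) *
        μH[(n : ℝ)] Q₀ := by
  set z₀ := D.center Q₀
  -- group the cubes of `T` by their ancestors one generation above `Q₀`
  set Rs := {R | R ∈ D.cubes (m - 1) ∧ (R ∩ ball z₀ (r * 2 ^ (-m))).Nonempty}
  have hcover : T ⊆ ⋃ R ∈ Rs, {t | t ∈ T ∧ t.2 ⊆ R} := by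
    intro t ht
    obtain ⟨htc, -, hmt, w, hwt, hwz⟩ := hT t ht
    obtain ⟨R, ⟨hR, htR⟩, -⟩ := D.parent t.1 t.2 htc (m - 1) (by omega)
    exact mem_biUnion ⟨hR, w, htR hwt, hwz⟩ ⟨ht, htR⟩
  have h2m : (2 : ℝ) ^ (-(m - 1)) = 2 * 2 ^ (-m) := by
    rw [neg_sub, sub_eq_add_neg, zpow_add₀ two_ne_zero, zpow_one]
  have hRsub : ∀ R : Rs, (R : Set (ES n)) ⊆ E ∩ ball z₀ ((r + 2 * D.Cstar) * 2 ^ (-m)) := by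
    rintro ⟨R, hR, w, hwR, hwz⟩ x hx
    refine ⟨D.subset_of_mem hR hx, mem_ball.mpr ?_⟩
    have := D.dist_le hR hx hwR
    rw [h2m] at this
    linarith [dist_triangle x w z₀, mem_ball.mp hwz]
  have hdisj : Pairwise fun R R' : Rs => Disjoint (R : Set (ES n)) R' :=
    fun R R' hne => D.disjoint_of_ne R.2.1 R'.2.1 (Subtype.coe_injective.ne hne)
  have hz₀ : z₀ ∈ E := D.subset_of_mem hQ₀ (D.center_mem _ _ hQ₀)
  refine (ENNReal.tsum_mono_subtype (fun t => μH[(n : ℝ)] t.2) hcover).trans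
    ((ENNReal.tsum_biUnion_le_tsum (fun t : ℤ × Set (ES n) => μH[(n : ℝ)] t.2) Rs _).trans ?_)
  calc ∑' R : Rs, ∑' t : {t | t ∈ T ∧ t.2 ⊆ R}, μH[(n : ℝ)] t.1.2
      ≤ ∑' R : Rs, ENNReal.ofReal C₁ * μH[(n : ℝ)] (R : Set (ES n)) :=
        ENNReal.tsum_le_tsum fun R => hB.tsum_measure_le R.2.1 fun t ht =>
          ⟨(hT t ht.1).1, (hT t ht.1).2.1, ht.2⟩
    _ = ENNReal.ofReal C₁ * ∑' R : Rs, μH[(n : ℝ)] (R : Set (ES n)) := ENNReal.tsum_mul_left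
    _ ≤ ENNReal.ofReal C₁ *
          μH[(n : ℝ)] (E ∩ ball z₀ ((r + 2 * D.Cstar) * 2 ^ (-m))) := by
        gcongr
        exact (tsum_meas_le_meas_iUnion_of_disjoint _ (fun R => D.borel _ _ R.2.1) hdisj).trans
          (measure_mono (iUnion_subset hRsub))
    _ ≤ ENNReal.ofReal C₁ *
          (ENNReal.ofReal (adrDoublingConst n C ((r + 2 * D.Cstar) / D.a₀)) *
            μH[(n : ℝ)] (E ∩ ball z₀ (D.a₀ * 2 ^ (-m)))) := by
        gcongr
        refine hE.measure_inter_ball_le_mul hz₀ (mul_pos D.a₀_pos (zpow_pos two_pos _)) ?_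
        exact le_of_eq (by field_simp [D.a₀_pos.ne'])
    _ ≤ _ := by
        rw [← mul_assoc]
        gcongr
        exact D.contains_ball _ _ hQ₀

theorem tsum_measure_near_subcubes_le {C K₀ : ℝ} {M : ℕ} (hE : IsADR n C E)
    (hB : PackedBy E D B C₁) {k₀ : ℤ} {Q₀ : Set (ES n)} (hQ₀ : Q₀ ∈ D.cubes k₀)
    {S : Set (ℤ × Set (ES n))} (hS : ∀ p ∈ S, p.2 ∈ D.cubes p.1 ∧ p.2 ⊆ Q₀) :
    ∑' q : {q : ℤ × Set (ES n) |
        q.2 ∈ D.cubes q.1 ∧ B q.1 q.2 ∧ ∃ p ∈ S, D.IsNear K₀ M p q},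
        μH[(n : ℝ)] q.1.2 ≤
      ENNReal.ofReal C₁ *
        ENNReal.ofReal (adrDoublingConst n C ((K₀ ^ 2 + D.Cstar + 2 * D.Cstar) / D.a₀)) *
          μH[(n : ℝ)] Q₀ := by
  -- either `Q₀` belongs to arbitrarily coarse generations, and then it is all of `E`,
  -- or it has a coarsest generation `m`, which bounds the generations occurring in `S`
  rcases D.eq_or_exists_forall_le hQ₀ S hS with hQE | ⟨m, hm, hmS⟩
  · calc _ ≤ ENNReal.ofReal C₁ * μH[(n : ℝ)] Q₀ :=
          hB.tsum_measure_le hQ₀ fun q hq => ⟨hq.1, hq.2.1, hQE ▸ D.subset_of_mem hq.1⟩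
      _ ≤ _ := by
          rw [mul_right_comm]
          exact le_mul_of_one_le_right zero_le
            (ENNReal.one_le_ofReal.mpr (one_le_adrDoublingConst _ _ _))
  refine hB.tsum_measure_le_of_meets_ball hE hm fun q ⟨hq, hBq, p, hp, hpq⟩ =>
    ⟨hq, hBq, (hmS p hp).trans hpq.1, ?_⟩
  obtain ⟨-, -, w, hwq, hwp⟩ := hpq
  refine ⟨w, hwq, mem_ball.mpr ?_⟩
  have h₁ := D.dist_le hm ((hS p hp).2 (D.center_mem _ _ (hS p hp).1)) (D.center_mem _ _ hm)
  have h₂ : K₀ ^ 2 * 2 ^ (-p.1) ≤ K₀ ^ 2 * (2 : ℝ) ^ (-m) :=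
    mul_le_mul_of_nonneg_left (zpow_le_zpow_right₀ one_le_two (by linarith [hmS p hp]))
      (sq_nonneg _)
  linarith [dist_triangle w (D.center p.2) (D.center Q₀), mem_ball.mp hwp]

theorem nearFamily {C : ℝ} (hE : IsADR n C E) (hB : PackedBy E D B C₁) (K₀ : ℝ) (M : ℕ) :
    PackedBy E D (D.nearFamily B K₀ M)
      ((M + 1) * adrDoublingConst n C ((K₀ ^ 2 + 2 * D.Cstar) * 2 ^ M / D.a₀) *
        (C₁ * adrDoublingConst n C ((K₀ ^ 2 + D.Cstar + 2 * D.Cstar) / D.a₀))) := by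
  intro k₀ Q₀ hQ₀
  set S := {p : ℤ × Set (ES n) |
    p.2 ∈ D.cubes p.1 ∧ D.nearFamily B K₀ M p.1 p.2 ∧ p.2 ⊆ Q₀}
  set T := {q : ℤ × Set (ES n) |
    q.2 ∈ D.cubes q.1 ∧ B q.1 q.2 ∧ ∃ p ∈ S, D.IsNear K₀ M p q}
  set A₁ := adrDoublingConst n C ((K₀ ^ 2 + 2 * D.Cstar) * 2 ^ M / D.a₀)
  set A₂ := adrDoublingConst n C ((K₀ ^ 2 + D.Cstar + 2 * D.Cstar) / D.a₀)
  have hST : S ⊆ ⋃ q : T, {p | p.2 ∈ D.cubes p.1 ∧ D.IsNear K₀ M p q} := fun p hp =>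
    have ⟨q, hq, hBq, hpq⟩ := hp.2.1
    mem_iUnion.mpr ⟨⟨q, hq, hBq, p, hp, hpq⟩, hp.1, hpq⟩
  have hA₁ : 0 ≤ A₁ := zero_le_one.trans (one_le_adrDoublingConst _ _ _)
  have hA₂ : 0 ≤ A₂ := zero_le_one.trans (one_le_adrDoublingConst _ _ _)
  refine (ENNReal.tsum_mono_subtype (fun p : ℤ × Set (ES n) => μH[(n : ℝ)] p.2) hST).trans
    ((ENNReal.tsum_iUnion_le_tsum (fun p : ℤ × Set (ES n) => μH[(n : ℝ)] p.2) _).trans ?_)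
  calc ∑' q : T, ∑' p : {p | p.2 ∈ D.cubes p.1 ∧ D.IsNear K₀ M p q}, μH[(n : ℝ)] p.1.2
      ≤ ∑' q : T, ENNReal.ofReal ((M + 1) * A₁) * μH[(n : ℝ)] q.1.2 :=
        ENNReal.tsum_le_tsum fun q => D.tsum_measure_isNear_le hE q.2.1
    _ = ENNReal.ofReal ((M + 1) * A₁) * ∑' q : T, μH[(n : ℝ)] q.1.2 := ENNReal.tsum_mul_left
    _ ≤ ENNReal.ofReal ((M + 1) * A₁) *
          (ENNReal.ofReal C₁ * ENNReal.ofReal A₂ * μH[(n : ℝ)] Q₀) := by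
        gcongr
        exact hB.tsum_measure_near_subcubes_le hE hQ₀ fun p hp => ⟨hp.1, hp.2.2⟩
    _ = _ := by
        rw [ENNReal.ofReal_mul (p := (M + 1) * A₁) (by positivity),
          ENNReal.ofReal_mul' (q := A₂) hA₂]
        ring

end PackedBy

theorem le_of_two_zpow_neg_le {k k' : ℤ} (h : (2 : ℝ) ^ (-k') ≤ 2 ^ (-k)) : k ≤ k' := by
  have := (zpow_le_zpow_iff_right₀ one_lt_two).mp h
  omega

theorem le_add_of_mul_two_zpow_neg_le {δ : ℝ} {k k' : ℤ} {M : ℕ}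
    (hM : (2 : ℝ) ^ (-(M : ℤ)) ≤ δ) (h : δ * 2 ^ (-k) ≤ 2 ^ (-k')) : k' ≤ k + M := by
  refine le_of_two_zpow_neg_le (le_trans ?_ h)
  rw [neg_add, zpow_add₀ two_ne_zero, mul_comm]
  exact mul_le_mul_of_nonneg_right hM (zpow_nonneg zero_le_two _)

theorem packing_of_dilated_family_general (n : ℕ) (C_ADR a₀ γ Cstar K₀ ε C₁ : ℝ) (hε : 0 < ε) :
    ∃ Cε : ℝ,
      ∀ E : Set (ES n), IsADR n C_ADR E →
      ∀ D : DyadicSystem n E, D.a₀ = a₀ → D.γ = γ → D.Cstar = Cstar →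
      ∀ B₀ : ℤ → Set (ES n) → Prop,
        PackedBy E D B₀ C₁ →
        PackedBy E D
          (fun k Q => ∃ (k' : ℤ) (Q' : Set (ES n)), Q' ∈ D.cubes k' ∧ B₀ k' Q' ∧
            ε ^ ((3 : ℝ) / 2) * 2 ^ (-k) ≤ 2 ^ (-k') ∧ (2 : ℝ) ^ (-k') ≤ 2 ^ (-k) ∧
            (Q' ∩ ball (D.center Q) (K₀ ^ 2 * 2 ^ (-k))).Nonempty)
          Cε := by
  obtain ⟨M, hM⟩ : ∃ M : ℕ, (2 : ℝ) ^ (-(M : ℤ)) ≤ ε ^ ((3 : ℝ) / 2) := by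
    obtain ⟨M, hM⟩ := exists_pow_lt_of_lt_one (Real.rpow_pos_of_pos hε ((3 : ℝ) / 2))
      (by norm_num : (2⁻¹ : ℝ) < 1)
    exact ⟨M, by rw [zpow_neg, zpow_natCast, ← inv_pow]; exact hM.le⟩
  refine ⟨(M + 1) * adrDoublingConst n C_ADR ((K₀ ^ 2 + 2 * Cstar) * 2 ^ M / a₀) *
    (C₁ * adrDoublingConst n C_ADR ((K₀ ^ 2 + Cstar + 2 * Cstar) / a₀)), ?_⟩
  rintro E hE D rfl - rfl B₀ hB
  exact (hB.nearFamily hE K₀ M).mono fun k Q ⟨k', Q', hQ', hBQ', hlow, hup, hmeet⟩ =>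
    ⟨(k', Q'), hQ', hBQ', le_of_two_zpow_neg_le hup, le_add_of_mul_two_zpow_neg_le hM hlow,
      hmeet⟩

/-- If `ℬ₀` satisfies a Carleson packing condition, then the measure
`α_Q = σ(Q)` when `ℬ₀ ∩ 𝔻_ε(Q) ≠ ∅` (and `0` otherwise) also satisfies a Carleson packing
condition, with constant depending only on `n`, the ADR and dyadic constants, `K₀`, `ε`
and the packing constant of `ℬ₀`. Here `𝔻_ε(Q)` consists of those cubes `Q'` with
`ε^{3/2}ℓ(Q) ≤ ℓ(Q') ≤ ℓ(Q)` meeting `B_Q^* = B(x_Q, K₀²ℓ(Q))`. -/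
theorem packing_of_dilated_family (n : ℕ) (C_ADR a₀ γ Cstar K₀ ε C₁ : ℝ)
    (hK₀ : 1 ≤ K₀) (hε : 0 < ε) (hε1 : ε < 1) (hC₁ : 0 < C₁) :
    ∃ Cε : ℝ,
      ∀ E : Set (ES n), IsADR n C_ADR E →
      ∀ D : DyadicSystem n E, D.a₀ = a₀ → D.γ = γ → D.Cstar = Cstar →
      ∀ B₀ : ℤ → Set (ES n) → Prop,
        PackedBy E D B₀ C₁ →
        PackedBy E D
          (fun k Q => ∃ (k' : ℤ) (Q' : Set (ES n)), Q' ∈ D.cubes k' ∧ B₀ k' Q' ∧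
            ε ^ ((3 : ℝ) / 2) * 2 ^ (-k) ≤ 2 ^ (-k') ∧ (2 : ℝ) ^ (-k') ≤ 2 ^ (-k) ∧
            (Q' ∩ ball (D.center Q) (K₀ ^ 2 * 2 ^ (-k))).Nonempty)
          Cε :=
  packing_of_dilated_family_general n C_ADR a₀ γ Cstar K₀ ε C₁ hε
end
end
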